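/- Let (A, ≺) be a subordination algebra with ¬a := ⋁{c ∈ A | a ∧ c ≺ ⊥}. Then the inequality a ∧ ¬a ≤ ⊥ holds in A^δ for all a ∈ A if and only if for all b ∈ A, b ≺ ⊥ implies b = ⊥. -/

import Mathlib

/-- A subordination algebra relation on a bounded distributive lattice. -/
structure SubordAlg (A : Type*) [DistribLattice A] [BoundedOrder A] where
  prec : A → A → Prop
  prec_bot : prec ⊥ ⊥
  prec_top : prec ⊤ ⊤
  prec_and : ∀ {a b c : A}, prec a b → prec a c → prec a (b ⊓ c)
  prec_or : ∀ {a b c : A}, prec a c → prec b c → prec (a ⊔ b) c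
  prec_wosi : ∀ {a b c d : A}, a ≤ b → prec b c → c ≤ d → prec a d

/-- A presentation of the canonical extension of a bounded (distributive) lattice `A`:
a complete lattice `Aδ` together with a dense and compact lattice embedding. -/
structure CanExt (A : Type*) [DistribLattice A] [BoundedOrder A]
    (Aδ : Type*) [CompleteLattice Aδ] where
  e : A → Aδ
  le_iff : ∀ a b : A, a ≤ b ↔ e a ≤ e b
  map_inf : ∀ a b : A, e (a ⊓ b) = e a ⊓ e b
  map_sup : ∀ a b : A, e (a ⊔ b) = e a ⊔ e b
  map_bot : e ⊥ = ⊥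
  map_top : e ⊤ = ⊤
  dense_closed : ∀ u : Aδ,
    u = sSup {k | (∃ F : Set A, F.Nonempty ∧ k = sInf (e '' F)) ∧ k ≤ u}
  dense_open : ∀ u : Aδ,
    u = sInf {o | (∃ I : Set A, I.Nonempty ∧ o = sSup (e '' I)) ∧ u ≤ o}
  compact : ∀ F I : Set A, F.Nonempty → I.Nonempty →
    sInf (e '' F) ≤ sSup (e '' I) →
    ∃ F' I' : Set A, F' ⊆ F ∧ I' ⊆ I ∧ F'.Finite ∧ I'.Finite ∧
      sInf (e '' F') ≤ sSup (e '' I')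

/-- Closed elements of the canonical extension: meets of nonempty subsets of `A`. -/
def CanExt.IsClosed {A : Type*} [DistribLattice A] [BoundedOrder A]
    {Aδ : Type*} [CompleteLattice Aδ] (C : CanExt A Aδ) (k : Aδ) : Prop :=
  ∃ F : Set A, F.Nonempty ∧ k = sInf (C.e '' F)

/-- Open elements of the canonical extension: joins of nonempty subsets of `A`. -/
def CanExt.IsOpen {A : Type*} [DistribLattice A] [BoundedOrder A]
    {Aδ : Type*} [CompleteLattice Aδ] (C : CanExt A Aδ) (o : Aδ) : Prop :=
  ∃ I : Set A, I.Nonempty ∧ o = sSup (C.e '' I)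

/-- The slanted implication `a ⇒_≺ b := ⋁{c | a ⊓ c ≺ b}` induced by a relation. -/
def slantImp {A : Type*} [DistribLattice A] [BoundedOrder A]
    {Aδ : Type*} [CompleteLattice Aδ] (C : CanExt A Aδ)
    (R : A → A → Prop) (a b : A) : Aδ :=
  sSup (C.e '' {c | R (a ⊓ c) b})

/-- The slanted co-implication `a ⩾_≺ b := ⋀{c | b ≺ a ⊔ c}` induced by a relation. -/
def slantCoimp {A : Type*} [DistribLattice A] [BoundedOrder A]
    {Aδ : Type*} [CompleteLattice Aδ] (C : CanExt A Aδ)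
    (R : A → A → Prop) (a b : A) : Aδ :=
  sInf (C.e '' {c | R b (a ⊔ c)})

/-- The slanted negation `¬a := ⋁{c | a ⊓ c ≺ ⊥}`. -/
def slantNeg {A : Type*} [DistribLattice A] [BoundedOrder A]
    {Aδ : Type*} [CompleteLattice Aδ] (C : CanExt A Aδ)
    (R : A → A → Prop) (a : A) : Aδ :=
  sSup (C.e '' {c | R (a ⊓ c) ⊥})

/-- The slanted co-negation `∼a := ⋀{c | ⊤ ≺ a ⊔ c}`. -/
def slantSim {A : Type*} [DistribLattice A] [BoundedOrder A]
    {Aδ : Type*} [CompleteLattice Aδ] (C : CanExt A Aδ)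
    (R : A → A → Prop) (a : A) : Aδ :=
  sInf (C.e '' {c | R ⊤ (a ⊔ c)})

/-- A slanted Heyting algebra over a canonical extension `C`. -/
structure SlantedHeyting (A : Type*) [DistribLattice A] [BoundedOrder A]
    (Aδ : Type*) [CompleteLattice Aδ] (C : CanExt A Aδ) where
  imp : A → A → Aδ
  imp_open : ∀ a b : A, C.IsOpen (imp a b)
  imp_inf : ∀ a b₁ b₂ : A, imp a (b₁ ⊓ b₂) = imp a b₁ ⊓ imp a b₂
  imp_top : ∀ a : A, imp a ⊤ = ⊤
  sup_imp : ∀ a₁ a₂ b : A, imp (a₁ ⊔ a₂) b = imp a₁ b ⊓ imp a₂ b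
  bot_imp : ∀ b : A, imp ⊥ b = ⊤
  resid : ∀ a b c : A, C.e c ≤ imp a b ↔ C.e (a ⊓ c) ≤ imp ⊤ b

/-- A slanted co-Heyting algebra over a canonical extension `C`. -/
structure SlantedCoHeyting (A : Type*) [DistribLattice A] [BoundedOrder A]
    (Aδ : Type*) [CompleteLattice Aδ] (C : CanExt A Aδ) where
  coimp : A → A → Aδ
  coimp_closed : ∀ a b : A, C.IsClosed (coimp a b)
  coimp_sup : ∀ a b₁ b₂ : A, coimp a (b₁ ⊔ b₂) = coimp a b₁ ⊔ coimp a b₂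
  coimp_bot : ∀ a : A, coimp a ⊥ = ⊥
  inf_coimp : ∀ a₁ a₂ b : A, coimp (a₁ ⊓ a₂) b = coimp a₁ b ⊔ coimp a₂ b
  top_coimp : ∀ b : A, coimp ⊤ b = ⊥
  resid : ∀ a b c : A, coimp a b ≤ C.e c ↔ coimp ⊥ b ≤ C.e (a ⊔ c)

/-- The π-extension of a slanted implication on a closed first argument and open
second argument: `k ⇒^π o := ⋁{a ⇒ b | k ≤ a, b ≤ o}`. -/
def impPiKO {A : Type*} [DistribLattice A] [BoundedOrder A]
    {Aδ : Type*} [CompleteLattice Aδ] {C : CanExt A Aδ}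
    (H : SlantedHeyting A Aδ C) (k o : Aδ) : Aδ :=
  sSup {u | ∃ a b : A, u = H.imp a b ∧ k ≤ C.e a ∧ C.e b ≤ o}

/-- The π-extension of a slanted implication on arbitrary arguments. -/
def impPi {A : Type*} [DistribLattice A] [BoundedOrder A]
    {Aδ : Type*} [CompleteLattice Aδ] {C : CanExt A Aδ}
    (H : SlantedHeyting A Aδ C) (u v : Aδ) : Aδ :=
  sInf {w | ∃ k o : Aδ, C.IsClosed k ∧ C.IsOpen o ∧ k ≤ u ∧ v ≤ o ∧ w = impPiKO H k o}

/-! If `b ≺ ⊥` then `b ≤ ¬b`, so `b ≤ b ∧ ¬b ≤ ⊥`. Conversely, the set `{c | a ∧ c ≺ ⊥}` is an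
ideal of `A`, so by compactness every closed element below `a ∧ ¬a` lies below `a ∧ c` for some
`c` with `a ∧ c ≺ ⊥`, i.e. below `⊥`; density of the closed elements finishes the proof. -/

namespace CanExt

variable {A : Type*} [DistribLattice A] [BoundedOrder A] {Aδ : Type*} [CompleteLattice Aδ]
  (C : CanExt A Aδ)

theorem monotone_e : Monotone C.e := fun a b => (C.le_iff a b).mp

theorem le_of_forall_isClosed_le {u v : Aδ} (h : ∀ k, C.IsClosed k → k ≤ u → k ≤ v) : u ≤ v := by
  rw [C.dense_closed u]
  exact sSup_le fun k ⟨hk, hku⟩ => h k hk hku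

theorem exists_le_e_of_isClosed_le_sSup {k : Aδ} (hk : C.IsClosed k) {I : Set A}
    (hI : SupClosed I) (hbot : ⊥ ∈ I) (hkI : k ≤ sSup (C.e '' I)) : ∃ c ∈ I, k ≤ C.e c := by
  obtain ⟨F, hF, rfl⟩ := hk
  obtain ⟨F', I', hF'F, hI'I, -, hI', hle⟩ := C.compact F I hF ⟨⊥, hbot⟩ hkI
  refine ⟨hI'.toFinset.sup id,
    Finset.sup_induction hbot hI fun c hc => hI'I (hI'.mem_toFinset.mp hc), ?_⟩
  calc sInf (C.e '' F) ≤ sInf (C.e '' F') := sInf_le_sInf (Set.image_mono hF'F)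
    _ ≤ sSup (C.e '' I') := hle
    _ ≤ C.e (hI'.toFinset.sup id) := sSup_le <| Set.forall_mem_image.2 fun c hc =>
        C.monotone_e (Finset.le_sup (f := id) (hI'.mem_toFinset.mpr hc))

theorem e_le_slantNeg {R : A → A → Prop} {a c : A} (h : R (a ⊓ c) ⊥) :
    C.e c ≤ slantNeg C R a :=
  le_sSup ⟨c, h, rfl⟩

end CanExt

namespace SubordAlg

variable {A : Type*} [DistribLattice A] [BoundedOrder A] (S : SubordAlg A)

theorem supClosed_setOf_inf_prec_bot (a : A) : SupClosed {c | S.prec (a ⊓ c) ⊥} := by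
  intro x hx y hy
  show S.prec (a ⊓ (x ⊔ y)) ⊥
  rw [inf_sup_left]
  exact S.prec_or hx hy

theorem inf_bot_prec_bot (a : A) : S.prec (a ⊓ ⊥) ⊥ := by
  rw [inf_bot_eq]
  exact S.prec_bot

end SubordAlg

theorem stmt14 {A : Type*} [DistribLattice A] [BoundedOrder A]
    {Aδ : Type*} [CompleteLattice Aδ] (C : CanExt A Aδ) (S : SubordAlg A) :
    (∀ a : A, C.e a ⊓ slantNeg C S.prec a ≤ ⊥) ↔
      (∀ b : A, S.prec b ⊥ → b = ⊥) := by
  constructor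
  · intro h b hb
    have hb_le_neg : C.e b ≤ slantNeg C S.prec b := C.e_le_slantNeg (by rwa [inf_idem])
    have hb_le_bot : C.e b ≤ C.e ⊥ := C.map_bot ▸ (le_inf le_rfl hb_le_neg).trans (h b)
    exact le_bot_iff.mp ((C.le_iff b ⊥).mpr hb_le_bot)
  · intro h a
    refine C.le_of_forall_isClosed_le fun k hk hka => ?_
    obtain ⟨c, hc, hkc⟩ := C.exists_le_e_of_isClosed_le_sSup hk
      (S.supClosed_setOf_inf_prec_bot a) (S.inf_bot_prec_bot a) (hka.trans inf_le_right)
    calc k ≤ C.e (a ⊓ c) := C.map_inf a c ▸ le_inf (hka.trans inf_le_left) hkc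
      _ = ⊥ := by rw [h _ hc, C.map_bot]
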